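/- The following values hold: a_1^+(0) = 2, and a_J^+(1,…,1) = 2((−1)^{(J+1)/2}+1) for every odd J ≥ 1; a_1^−(0) = 2, and a_J^−(1,…,1) = 2((−1)^{(J−1)/2}+1) for every odd J ≥ 1; a_2^+(0,0) = a_2^+(1,0) = 0, and a_J^+(1,…,1) = 2((−1)^{J/2}−1) for every even J ≥ 2; a_2^−(0,0) = a_2^−(1,0) = −4, and a_J^−(1,…,1) = −2((−1)^{J/2}+1) for every even J ≥ 2. (Corollary 7.8) -/
import Mathlib


/-- The `J × J` real symmetric matrix `A_J^ε(x₁, …, x_J)` (vertices `0`-indexed):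
`A_J^ε = -2 ∑ᵢ xᵢ E_{i,i} + ∑_{i=1}^{J-1} (E_{i,i+1} + E_{i+1,i}) + ε (E_{1,J} + E_{J,1})`. -/
def matA (J : ℕ) (ε : ℝ) (x : ℕ → ℝ) : Matrix (Fin J) (Fin J) ℝ :=
  Matrix.of fun i j =>
    (if (i : ℕ) = (j : ℕ) then -2 * x (i : ℕ) else 0)
    + (if (i : ℕ) + 1 = (j : ℕ) ∨ (j : ℕ) + 1 = (i : ℕ) then 1 else 0)
    + (if (i : ℕ) = 0 ∧ (j : ℕ) = J - 1 then ε else 0)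
    + (if (j : ℕ) = 0 ∧ (i : ℕ) = J - 1 then ε else 0)

/-- `a_J^+ = det A_J^+` if `J ≡ 0, 1 (mod 4)` and `a_J^+ = -det A_J^-` if `J ≡ 2, 3 (mod 4)`. -/
noncomputable def aPlus (J : ℕ) (x : ℕ → ℝ) : ℝ :=
  if J % 4 = 0 ∨ J % 4 = 1 then (matA J 1 x).det else -(matA J (-1) x).det

/-- `a_J^- = -det A_J^-` if `J ≡ 0, 1 (mod 4)` and `a_J^- = det A_J^+` if `J ≡ 2, 3 (mod 4)`. -/
noncomputable def aMinus (J : ℕ) (x : ℕ → ℝ) : ℝ :=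
  if J % 4 = 0 ∨ J % 4 = 1 then -(matA J (-1) x).det else (matA J 1 x).det

open Matrix

/-- The signed cyclic shift matrix `S` with `1` on the superdiagonal and `ε` in the corner. -/
def matS (J : ℕ) (ε : ℝ) : Matrix (Fin J) (Fin J) ℝ :=
  Matrix.of fun i j =>
    (if (i : ℕ) + 1 = (j : ℕ) then 1 else 0) + (if (i : ℕ) = J - 1 ∧ (j : ℕ) = 0 then ε else 0)

/-- The cyclically next index. -/
def nxt (J : ℕ) (i : Fin J) : Fin J :=
  if h : (i : ℕ) + 1 < J then ⟨(i : ℕ) + 1, h⟩ else ⟨0, lt_of_le_of_lt (Nat.zero_le _) i.isLt⟩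

lemma matS_apply (J : ℕ) (ε : ℝ) (i k : Fin J) :
    matS J ε i k = if k = nxt J i then (if (i : ℕ) = J - 1 then ε else 1) else 0 := by
  have hiJ := i.isLt
  have hkJ := k.isLt
  unfold matS nxt
  by_cases h : (i : ℕ) + 1 < J
  · rw [dif_pos h]
    have hni : ¬ (i : ℕ) = J - 1 := by omega
    rcases eq_or_ne ((i : ℕ) + 1) (k : ℕ) with he | he
    · rw [if_pos (Fin.ext he.symm)]
      simp [he, hni]
    · rw [if_neg (fun hh => he (Fin.ext_iff.mp hh).symm)]
      simp [he, hni]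
  · rw [dif_neg h]
    have hi : (i : ℕ) = J - 1 := by omega
    have hne : ¬ (i : ℕ) + 1 = (k : ℕ) := by omega
    rcases eq_or_ne ((k : ℕ)) 0 with he | he
    · rw [if_pos (Fin.ext he)]
      simp [he, hi, hne]
    · rw [if_neg (fun hh => he (Fin.ext_iff.mp hh))]
      simp only [Matrix.of_apply, if_neg hne]
      have : ¬ ((i:ℕ) = J - 1 ∧ (k:ℕ) = 0) := by omega
      simp [this]

lemma nxt_inj (J : ℕ) {i j : Fin J} (h : nxt J i = nxt J j) : i = j := by
  have hiJ := i.isLt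
  have hjJ := j.isLt
  unfold nxt at h
  split_ifs at h <;> simp_all [Fin.ext_iff] <;> omega

lemma matS_mul_transpose (J : ℕ) (ε : ℝ) (hε : ε * ε = 1) :
    matS J ε * (matS J ε)ᵀ = 1 := by
  ext i j
  rw [Matrix.mul_apply]
  simp only [Matrix.transpose_apply, matS_apply, ite_mul, zero_mul, mul_ite, mul_zero]
  rw [Finset.sum_ite_eq' Finset.univ (nxt J j)]
  simp only [Finset.mem_univ, if_true]
  rcases eq_or_ne i j with rfl | hij
  · rw [Matrix.one_apply_eq]
    split_ifs <;> simp_all [hε]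
  · have hne : nxt J j ≠ nxt J i := fun h => hij (nxt_inj J h).symm
    rw [Matrix.one_apply_ne hij]
    split_ifs <;> simp_all

lemma one_sub_matS_apply (J : ℕ) (ε : ℝ) (i k : Fin J) :
    (1 - matS J ε) i k = (if i = k then 1 else 0)
      - ((if (i : ℕ) + 1 = (k : ℕ) then 1 else 0)
        + (if (i : ℕ) = J - 1 ∧ (k : ℕ) = 0 then ε else 0)) := by
  simp [matS, Matrix.sub_apply, Matrix.one_apply]

set_option maxHeartbeats 3000000 in
lemma matA_ones (J : ℕ) (ε : ℝ) :
    matA J ε (fun _ => 1) = matS J ε + (matS J ε)ᵀ - (1 + 1) := by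
  ext i j
  have hiJ := i.isLt
  have hjJ := j.isLt
  have hij : (i = j) ↔ ((i : ℕ) = (j : ℕ)) := Fin.ext_iff
  simp only [matA, matS, Matrix.sub_apply, Matrix.add_apply, Matrix.transpose_apply,
    Matrix.one_apply, Matrix.of_apply, hij]
  split_ifs <;> first | omega | ring

lemma det_one_sub_matS (J : ℕ) (hJ : 1 ≤ J) (ε : ℝ) :
    (1 - matS J ε).det = 1 - ε := by
  match J, hJ with
  | 1, _ =>
    rw [Matrix.det_fin_one, one_sub_matS_apply]
    norm_num
  | (n+2), _ => ?_
  set M : Matrix (Fin (n+2)) (Fin (n+2)) ℝ := 1 - matS (n+2) ε with hM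
  rw [Matrix.det_succ_column_zero]
  rw [Finset.sum_eq_add_of_mem 0 (Fin.last (n+1)) (Finset.mem_univ _) (Finset.mem_univ _)
    (by simp [Fin.ext_iff]) ?_]
  · -- the two surviving terms
    have h00 : M 0 0 = 1 := by
      rw [hM, one_sub_matS_apply]
      norm_num
    have hl0 : M (Fin.last (n+1)) 0 = -ε := by
      rw [hM, one_sub_matS_apply]
      have h1 : ¬ ((Fin.last (n+1) : Fin (n+2)) = 0) := by simp [Fin.ext_iff]
      have h2 : ¬ ((Fin.last (n+1) : Fin (n+2)) : ℕ) + 1 = ((0 : Fin (n+2)) : ℕ) := by simp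
      rw [if_neg h1, if_neg h2, if_pos (by simp)]
      ring
    have hDet0 : (M.submatrix (Fin.succAbove 0) Fin.succ).det = 1 := by
      have htri : (M.submatrix (Fin.succAbove 0) Fin.succ).BlockTriangular id := by
        intro a b hab
        have hab' : (b : ℕ) < (a : ℕ) := hab
        simp only [Matrix.submatrix_apply, Fin.succAbove_zero, hM, one_sub_matS_apply,
          Fin.val_succ]
        rw [if_neg (by simp [Fin.ext_iff]; omega), if_neg (by omega),
          if_neg (by simp)]
        ring
      rw [Matrix.det_of_upperTriangular htri]
      apply Finset.prod_eq_one
      intro a _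
      simp only [Matrix.submatrix_apply, Fin.succAbove_zero, hM, one_sub_matS_apply,
        Fin.val_succ]
      have h2 : ¬ ((a:ℕ) + 1 + 1 = (a:ℕ) + 1) := by omega
      have h3 : ¬ ((a:ℕ) + 1 = n + 2 - 1 ∧ (a:ℕ) + 1 = 0) := by omega
      simp [h2, h3]
    have hDetl : (M.submatrix (Fin.last (n+1)).succAbove Fin.succ).det = (-1)^(n+1) := by
      have htri : (M.submatrix (Fin.last (n+1)).succAbove Fin.succ).BlockTriangular
          OrderDual.toDual := by
        intro a b hab
        have hab' : (a : ℕ) < (b : ℕ) := hab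
        simp only [Matrix.submatrix_apply, Fin.succAbove_last, hM, one_sub_matS_apply,
          Fin.val_succ, Fin.coe_castSucc]
        rw [if_neg (by simp only [Fin.ext_iff, Fin.coe_castSucc, Fin.val_succ]; omega),
          if_neg (by omega), if_neg (by omega)]
        ring
      rw [Matrix.det_of_lowerTriangular _ htri]
      have hdiag : ∀ a : Fin (n+1),
          (M.submatrix (Fin.last (n+1)).succAbove Fin.succ) a a = -1 := by
        intro a
        have haJ := a.isLt
        simp only [Matrix.submatrix_apply, Fin.succAbove_last, hM, one_sub_matS_apply,
          Fin.val_succ, Fin.coe_castSucc]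
        have h1 : ¬ ((Fin.castSucc a : Fin (n+2)) = Fin.succ a) := by
          simp only [Fin.ext_iff, Fin.coe_castSucc, Fin.val_succ]; omega
        have h3 : ¬ ((a:ℕ) = n + 2 - 1 ∧ (a:ℕ) + 1 = 0) := by omega
        rw [if_neg h1]
        simp [h3]
      rw [Finset.prod_congr rfl (fun a _ => hdiag a)]
      simp [Finset.prod_const, Finset.card_univ]
    rw [h00, hl0, hDet0, hDetl]
    have : ((-1 : ℝ))^((Fin.last (n+1) : Fin (n+2)) : ℕ) = (-1)^(n+1) := by
      simp
    rw [this]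
    have he : ((-1 : ℝ))^(n+1) * (-1)^(n+1) = 1 := by
      rw [← pow_add]
      exact Even.neg_one_pow ⟨n+1, by ring⟩
    simp only [Fin.val_zero, pow_zero]
    linear_combination (-ε) * he
  · -- all other terms vanish
    intro c _ hc
    have hc0 : ¬ (c = 0) := hc.1
    have hcl : ¬ ((c : ℕ) = n + 1) := by
      intro h
      exact hc.2 (Fin.ext (by simp [h]))
    have : M c 0 = 0 := by
      rw [hM, one_sub_matS_apply]
      rw [if_neg hc0, if_neg (by simp), if_neg (by simp [hcl])]
      ring
    rw [this]
    ring

lemma det_matA_ones (J : ℕ) (hJ : 1 ≤ J) (ε : ℝ) (hε : ε * ε = 1) :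
    (matA J ε (fun _ => 1)).det = (-1)^J * (1 - ε)^2 := by
  have hS := matS_mul_transpose J ε hε
  have hfac : matA J ε (fun _ => 1) = -((1 - matS J ε) * (1 - matS J ε)ᵀ) := by
    rw [matA_ones, Matrix.transpose_sub, Matrix.transpose_one, mul_sub, sub_mul, sub_mul,
      mul_one, one_mul, hS]
    simp only [mul_one]
    abel
  rw [hfac, Matrix.det_neg, Matrix.det_mul, Matrix.det_transpose, det_one_sub_matS J hJ ε]
  rw [Fintype.card_fin]
  ring

lemma detA_plus (J : ℕ) (hJ : 1 ≤ J) : (matA J 1 (fun _ => 1)).det = 0 := by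
  rw [det_matA_ones J hJ 1 (by norm_num)]
  norm_num

lemma detA_minus (J : ℕ) (hJ : 1 ≤ J) : (matA J (-1) (fun _ => 1)).det = (-1)^J * 4 := by
  rw [det_matA_ones J hJ (-1) (by norm_num)]
  norm_num

/-- Corollary 7.8: the initial values of the skein systems `{a_J^+}` and `{a_J^-}`. -/
theorem aPlus_aMinus_initial_values :
    aPlus 1 (fun _ => 0) = 2 ∧
    (∀ J : ℕ, 1 ≤ J → J % 2 = 1 →
      aPlus J (fun _ => 1) = 2 * ((-1 : ℝ) ^ ((J + 1) / 2) + 1)) ∧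
    aMinus 1 (fun _ => 0) = 2 ∧
    (∀ J : ℕ, 1 ≤ J → J % 2 = 1 →
      aMinus J (fun _ => 1) = 2 * ((-1 : ℝ) ^ ((J - 1) / 2) + 1)) ∧
    aPlus 2 (fun _ => 0) = 0 ∧
    aPlus 2 (fun i => if i = 0 then 1 else 0) = 0 ∧
    (∀ J : ℕ, 2 ≤ J → J % 2 = 0 →
      aPlus J (fun _ => 1) = 2 * ((-1 : ℝ) ^ (J / 2) - 1)) ∧
    aMinus 2 (fun _ => 0) = -4 ∧
    aMinus 2 (fun i => if i = 0 then 1 else 0) = -4 ∧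
    (∀ J : ℕ, 2 ≤ J → J % 2 = 0 →
      aMinus J (fun _ => 1) = -2 * ((-1 : ℝ) ^ (J / 2) + 1)) := by
  refine ⟨?_, ?_, ?_, ?_, ?_, ?_, ?_, ?_, ?_, ?_⟩
  · -- aPlus 1 0 = 2
    norm_num [aPlus, Matrix.det_fin_one, matA]
  · -- odd aPlus
    intro J hJ1 hJ2
    have h4 : J % 4 = 1 ∨ J % 4 = 3 := by omega
    rcases h4 with h4 | h4
    · obtain ⟨k, hk⟩ : ∃ k, J = 4 * k + 1 := ⟨J / 4, by omega⟩
      have h : aPlus J (fun _ => 1) = (matA J 1 (fun _ => 1)).det := by simp [aPlus, h4]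
      rw [h, detA_plus J hJ1]
      have h5 : (J + 1) / 2 = 2 * k + 1 := by omega
      rw [h5, Odd.neg_one_pow ⟨k, by ring⟩]
      ring
    · obtain ⟨k, hk⟩ : ∃ k, J = 4 * k + 3 := ⟨J / 4, by omega⟩
      have h : aPlus J (fun _ => 1) = -(matA J (-1) (fun _ => 1)).det := by
        have hn : ¬ (J % 4 = 0 ∨ J % 4 = 1) := by omega
        simp [aPlus, hn]
      rw [h, detA_minus J hJ1]
      have h5 : (J + 1) / 2 = 2 * (k + 1) := by omega
      have e1 : ((-1 : ℝ)) ^ J = -1 := Odd.neg_one_pow ⟨2 * k + 1, by omega⟩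
      have e2 : ((-1 : ℝ)) ^ (2 * (k + 1)) = 1 := Even.neg_one_pow ⟨k + 1, by ring⟩
      rw [h5, e1, e2]
      ring
  · -- aMinus 1 0 = 2
    norm_num [aMinus, Matrix.det_fin_one, matA]
  · -- odd aMinus
    intro J hJ1 hJ2
    have h4 : J % 4 = 1 ∨ J % 4 = 3 := by omega
    rcases h4 with h4 | h4
    · obtain ⟨k, hk⟩ : ∃ k, J = 4 * k + 1 := ⟨J / 4, by omega⟩
      have h : aMinus J (fun _ => 1) = -(matA J (-1) (fun _ => 1)).det := by simp [aMinus, h4]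
      rw [h, detA_minus J hJ1]
      have h5 : (J - 1) / 2 = 2 * k := by omega
      have e1 : ((-1 : ℝ)) ^ J = -1 := Odd.neg_one_pow ⟨2 * k, by omega⟩
      have e2 : ((-1 : ℝ)) ^ (2 * k) = 1 := Even.neg_one_pow ⟨k, by ring⟩
      rw [h5, e1, e2]
      ring
    · obtain ⟨k, hk⟩ : ∃ k, J = 4 * k + 3 := ⟨J / 4, by omega⟩
      have h : aMinus J (fun _ => 1) = (matA J 1 (fun _ => 1)).det := by
        have hn : ¬ (J % 4 = 0 ∨ J % 4 = 1) := by omega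
        simp [aMinus, hn]
      rw [h, detA_plus J hJ1]
      have h5 : (J - 1) / 2 = 2 * k + 1 := by omega
      rw [h5, Odd.neg_one_pow ⟨k, by ring⟩]
      ring
  · -- aPlus 2 0 = 0
    norm_num [aPlus, Matrix.det_fin_two, matA]
  · -- aPlus 2 (1,0) = 0
    norm_num [aPlus, Matrix.det_fin_two, matA]
  · -- even aPlus
    intro J hJ2 hJp
    have hJ1 : 1 ≤ J := by omega
    have h4 : J % 4 = 0 ∨ J % 4 = 2 := by omega
    rcases h4 with h4 | h4
    · obtain ⟨k, hk⟩ : ∃ k, J = 4 * k := ⟨J / 4, by omega⟩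
      have h : aPlus J (fun _ => 1) = (matA J 1 (fun _ => 1)).det := by simp [aPlus, h4]
      rw [h, detA_plus J hJ1]
      have h5 : J / 2 = 2 * k := by omega
      rw [h5, Even.neg_one_pow ⟨k, by ring⟩]
      ring
    · obtain ⟨k, hk⟩ : ∃ k, J = 4 * k + 2 := ⟨J / 4, by omega⟩
      have h : aPlus J (fun _ => 1) = -(matA J (-1) (fun _ => 1)).det := by
        have hn : ¬ (J % 4 = 0 ∨ J % 4 = 1) := by omega
        simp [aPlus, hn]
      rw [h, detA_minus J hJ1]
      have h5 : J / 2 = 2 * k + 1 := by omega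
      have e1 : ((-1 : ℝ)) ^ J = 1 := Even.neg_one_pow ⟨2 * k + 1, by omega⟩
      have e2 : ((-1 : ℝ)) ^ (2 * k + 1) = -1 := Odd.neg_one_pow ⟨k, by ring⟩
      rw [h5, e1, e2]
      ring
  · -- aMinus 2 0 = -4
    norm_num [aMinus, Matrix.det_fin_two, matA]
  · -- aMinus 2 (1,0) = -4
    norm_num [aMinus, Matrix.det_fin_two, matA]
  · -- even aMinus
    intro J hJ2 hJp
    have hJ1 : 1 ≤ J := by omega
    have h4 : J % 4 = 0 ∨ J % 4 = 2 := by omega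
    rcases h4 with h4 | h4
    · obtain ⟨k, hk⟩ : ∃ k, J = 4 * k := ⟨J / 4, by omega⟩
      have h : aMinus J (fun _ => 1) = -(matA J (-1) (fun _ => 1)).det := by simp [aMinus, h4]
      rw [h, detA_minus J hJ1]
      have h5 : J / 2 = 2 * k := by omega
      have e1 : ((-1 : ℝ)) ^ J = 1 := Even.neg_one_pow ⟨2 * k, by omega⟩
      have e2 : ((-1 : ℝ)) ^ (2 * k) = 1 := Even.neg_one_pow ⟨k, by ring⟩
      rw [h5, e1, e2]
      ring
    · obtain ⟨k, hk⟩ : ∃ k, J = 4 * k + 2 := ⟨J / 4, by omega⟩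
      have h : aMinus J (fun _ => 1) = (matA J 1 (fun _ => 1)).det := by
        have hn : ¬ (J % 4 = 0 ∨ J % 4 = 1) := by omega
        simp [aMinus, hn]
      rw [h, detA_plus J hJ1]
      have h5 : J / 2 = 2 * k + 1 := by omega
      rw [h5, Odd.neg_one_pow ⟨k, by ring⟩]
      ring
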